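/- In the formal power series ring ℚ[[z]], the identity Σ_{n=0}^{∞} Td(n; d_1,…,d_r) z^{n+r} = (1-z)^{-1} · ∏_{i=1}^{r} (1 - (1-z)^{d_i}) holds, where Td(n; d) := Σ_{j=0}^{r} (-1)^{n+r+j} Σ_{1 ≤ k_1 < ⋯ < k_j ≤ r} C(-1 + d_{k_1} + ⋯ + d_{k_j}, n+r). -/

import Mathlib

open Finset

/-- Generalized binomial coefficient `C(a, k) = a(a-1)⋯(a-k+1)/k!`. -/
def gbc (a : ℚ) (k : ℕ) : ℚ :=
  (∏ i ∈ Finset.range k, (a - i)) / (Nat.factorial k)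


/-- Todd genus of the complete intersection `X_n(d₁,…,d_r)` via the combinatorial formula. -/
def Td (n r : ℕ) (d : Fin r → ℤ) : ℚ :=
  ∑ S ∈ (Finset.univ : Finset (Fin r)).powerset,
    (-1) ^ (n + r + S.card) * gbc (-1 + ∑ i ∈ S, (d i : ℚ)) (n + r)

/-!
Writing `(1 - X)^a := rescale (-1) (binomialSeries a)` for arbitrary exponents `a`, one has
`(1 - X)^a (1 - X)^b = (1 - X)^(a + b)` and `coeff n ((1 - X)^a) = (-1)^n C(a, n)`.
Expanding `∏ i, (1 - (1 - X)^dᵢ) = ∑_S (-1)^|S| (1 - X)^(∑_{i∈S} dᵢ)` and multiplying by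
`(1 - X)⁻¹ = (1 - X)^(-1)`, the coefficient of `z^(n+r)` on the right is exactly `Td(n; d)`.
Since each factor `1 - (1 - X)^dᵢ` is divisible by `X`, the right side is `X^r` times a series,
and comparing coefficients identifies that series with `∑ Td(n; d) zⁿ`.
-/

lemma gbc_eq_ringChoose (a : ℚ) (k : ℕ) : gbc a k = Ring.choose a k := by
  rw [Ring.choose_eq_smul, gbc, smul_eq_mul, ← descPochhammer_eval_eq_prod_range,
    ← Polynomial.aeval_eq_smeval, ← descPochhammer_map (algebraMap ℤ ℚ), Polynomial.aeval_def,
    Polynomial.eval_map, inv_mul_eq_div]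

lemma Finset.prod_one_sub {ι R : Type*} [CommRing R] (s : Finset ι) (f : ι → R) :
    ∏ i ∈ s, (1 - f i) = ∑ t ∈ s.powerset, (-1) ^ #t * ∏ i ∈ t, f i := by
  simp only [sub_eq_add_neg, prod_one_add, prod_neg]

namespace PowerSeries

section BinomialRing

variable {R : Type*} [CommRing R] [BinomialRing R]

lemma rescale_neg_one_binomialSeries_add (a b : R) :
    rescale (-1 : R) (binomialSeries R (a + b)) =
      rescale (-1) (binomialSeries R a) * rescale (-1) (binomialSeries R b) := by
  rw [binomialSeries_add, map_mul]

lemma rescale_neg_one_binomialSeries_natCast (n : ℕ) :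
    rescale (-1 : R) (binomialSeries R (n : R)) = (1 - X) ^ n := by
  rw [binomialSeries_nat, map_pow, map_add, map_one, rescale_X, map_neg, map_one, neg_one_mul,
    sub_eq_add_neg]

lemma coeff_rescale_neg_one_binomialSeries (a : R) (n : ℕ) :
    coeff n (rescale (-1 : R) (binomialSeries R a)) = (-1) ^ n * Ring.choose a n := by
  rw [coeff_rescale, binomialSeries_coeff, smul_eq_mul, mul_one]

end BinomialRing

lemma inv_one_sub_X_eq_rescale_binomialSeries {k : Type*} [Field k] [BinomialRing k] :
    (1 - X : k⟦X⟧)⁻¹ = rescale (-1 : k) (binomialSeries k (-1 : k)) := by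
  have h := rescale_neg_one_binomialSeries_natCast (R := k) 1
  rw [Nat.cast_one, pow_one] at h
  rw [inv_eq_iff_mul_eq_one (by simp), ← h, ← map_mul, ← binomialSeries_add, neg_add_cancel,
    binomialSeries_zero, map_one]

lemma X_dvd_one_sub_one_sub_X_pow {R : Type*} [CommRing R] (n : ℕ) :
    (X : R⟦X⟧) ∣ 1 - (1 - X) ^ n := by
  have h := sub_dvd_pow_sub_pow (1 : R⟦X⟧) (1 - X) n
  rwa [sub_sub_cancel, one_pow] at h

lemma X_pow_card_dvd_prod_one_sub_one_sub_X_pow {ι R : Type*} [CommRing R] (s : Finset ι)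
    (d : ι → ℕ) : (X : R⟦X⟧) ^ #s ∣ ∏ i ∈ s, (1 - (1 - X) ^ d i) := by
  simpa using prod_dvd_prod_of_dvd (fun _ ↦ (X : R⟦X⟧)) _
    fun i _ ↦ X_dvd_one_sub_one_sub_X_pow (d i)

lemma coeff_inv_one_sub_X_mul_prod_one_sub_one_sub_X_pow {ι k : Type*} [Field k] [BinomialRing k]
    (s : Finset ι) (d : ι → ℕ) (n : ℕ) :
    coeff n ((1 - X)⁻¹ * ∏ i ∈ s, (1 - (1 - X) ^ d i)) =
      ∑ t ∈ s.powerset, (-1) ^ (n + #t) * Ring.choose (-1 + ∑ i ∈ t, (d i : k)) n := by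
  simp_rw [Finset.prod_one_sub, prod_pow_eq_pow_sum, mul_sum, map_sum,
    mul_left_comm _ ((-1 : k⟦X⟧) ^ _)]
  refine sum_congr rfl fun t _ ↦ ?_
  rw [inv_one_sub_X_eq_rescale_binomialSeries, ← rescale_neg_one_binomialSeries_natCast,
    ← rescale_neg_one_binomialSeries_add, show (-1 : k⟦X⟧) ^ #t = C ((-1 : k) ^ #t) by simp,
    coeff_C_mul, coeff_rescale_neg_one_binomialSeries, pow_add, Nat.cast_sum]
  ring

end PowerSeries

open PowerSeries in
theorem todd_generating_function_general (r : ℕ) (d : Fin r → ℕ) :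
    (PowerSeries.mk fun n => Td n r fun i => (d i : ℤ)) * PowerSeries.X ^ r =
      (1 - PowerSeries.X)⁻¹ * ∏ i, (1 - (1 - PowerSeries.X) ^ (d i)) := by
  obtain ⟨Q, hQ⟩ : (X : ℚ⟦X⟧) ^ r ∣ (1 - X)⁻¹ * ∏ i, (1 - (1 - X) ^ (d i)) := by
    simpa using dvd_mul_of_dvd_right (X_pow_card_dvd_prod_one_sub_one_sub_X_pow (R := ℚ) univ d) _
  rw [hQ, mul_comm]
  congr 1
  ext n
  rw [coeff_mk, ← coeff_X_pow_mul Q r n, ← hQ,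
    coeff_inv_one_sub_X_mul_prod_one_sub_one_sub_X_pow, Td]
  simp only [gbc_eq_ringChoose, Int.cast_natCast]

theorem todd_generating_function (r : ℕ) (hr : 1 ≤ r) (d : Fin r → ℕ) (hd : ∀ i, 0 < d i) :
    (PowerSeries.mk fun n => Td n r fun i => (d i : ℤ)) * PowerSeries.X ^ r =
      (1 - PowerSeries.X)⁻¹ * ∏ i, (1 - (1 - PowerSeries.X) ^ (d i)) :=
  todd_generating_function_general r d
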